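/- arXiv:math/0312014 — 5 statements merged into one kernel-verified Lean document; each statement's English description precedes it below -/
import Mathlib

section
/- For every natural number k ≥ 0, every decimal digit of the number (10^(k+1) + 4) · 10^(k+1) + 4 belongs to the set {0, 1, 4, 9}, i.e., every digit is itself a perfect square. -/
/-
The number is 10^(2k+2) + 4·10^(k+1) + 4, whose decimal expansion is 1 0…0 4 0…0 4: the digits
of 4, 4 and 1 separated by blocks of zeros. It is built as 4 + 10^(k+1)·(4 + 10^(k+1)·1), and
gluing m < b^j below b^j·n only introduces digits of m, digits of n and padding zeros.
-/

theorem Nat.mem_digits_add_base_pow_mul {b j m n d : ℕ} (hb : 1 < b) (hm : m < b ^ j)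
    (hd : d ∈ Nat.digits b (m + b ^ j * n)) :
    d = 0 ∨ d ∈ Nat.digits b m ∨ d ∈ Nat.digits b n := by
  rcases Nat.eq_zero_or_pos n with rfl | hn
  · simp_all
  obtain ⟨k, hk⟩ : ∃ k, j = (Nat.digits b m).length + k :=
    Nat.exists_eq_add_of_le ((Nat.digits_length_le_iff hb m).2 hm)
  rw [hk, ← Nat.digits_append_zeroes_append_digits hb hn] at hd
  simp only [List.mem_append, List.mem_replicate] at hd
  tauto

theorem stmt_2 : ∀ k : ℕ, ∀ d ∈ Nat.digits 10 ((10^(k+1) + 4) * 10^(k+1) + 4),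
    d ∈ ({0, 1, 4, 9} : Set ℕ) := by
  intro k d hd
  have h4 : 4 < 10 ^ (k + 1) :=
    lt_of_lt_of_le (by norm_num) (Nat.le_self_pow (Nat.succ_ne_zero k) 10)
  have hN : (10 ^ (k + 1) + 4) * 10 ^ (k + 1) + 4 = 4 + 10 ^ (k + 1) * (4 + 10 ^ (k + 1) * 1) := by
    ring
  rw [hN] at hd
  rcases Nat.mem_digits_add_base_pow_mul (by norm_num) h4 hd with rfl | hd | hd
  · simp
  · simp_all
  rcases Nat.mem_digits_add_base_pow_mul (by norm_num) h4 hd with rfl | hd | hd <;> simp_all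
end

section
/- There exist infinitely many perfect squares all of whose decimal digits are perfect squares (belong to {0,1,4,9}) and which are not of the form N · 10^(2k) with N a perfect square and k ≥ 1. -/
lemma digits_family (k : ℕ) :
    Nat.digits 10 (1 + 4*10^(k+1) + 4*10^(2*k+2)) =
      [1] ++ List.replicate k 0 ++ [4] ++ List.replicate k 0 ++ [4] := by
  have h4 : Nat.digits 10 4 = [4] := by norm_num
  have h1 : Nat.digits 10 1 = [1] := by norm_num
  have step1 : Nat.digits 10 4 ++ List.replicate k 0 ++ Nat.digits 10 4 =
      Nat.digits 10 (4 + 10^((Nat.digits 10 4).length + k) * 4) :=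
    Nat.digits_append_zeroes_append_digits (by norm_num) (by norm_num)
  have step2 : Nat.digits 10 1 ++ List.replicate k 0 ++ Nat.digits 10 (4 + 10^(1+k)*4) =
      Nat.digits 10 (1 + 10^((Nat.digits 10 1).length + k) * (4 + 10^(1+k)*4)) :=
    Nat.digits_append_zeroes_append_digits (by norm_num) (by positivity)
  rw [h4] at step1
  rw [h1] at step2
  simp only [List.length_singleton] at step1 step2
  have e : 1 + 10^(1+k) * (4 + 10^(1+k)*4) = 1 + 4*10^(k+1) + 4*10^(2*k+2) := by ring
  rw [e] at step2
  rw [← step2, ← step1]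
  simp [List.append_assoc]

theorem stmt_3 :
    {n : ℕ | (∃ m : ℕ, n = m^2) ∧
      (∀ d ∈ Nat.digits 10 n, d ∈ ({0, 1, 4, 9} : Set ℕ)) ∧
      ¬ ∃ N k : ℕ, (∃ m : ℕ, N = m^2) ∧ 1 ≤ k ∧ n = N * 10^(2*k)}.Infinite := by
  apply Set.infinite_of_injective_forall_mem (f := fun k : ℕ => (2*10^(k+1)+1)^2)
  case hi =>
    intro a b hab
    simp only at hab
    have : (10:ℕ)^(a+1) = 10^(b+1) := by nlinarith [pow_pos (by norm_num : (0:ℕ)<10) (a+1), pow_pos (by norm_num : (0:ℕ)<10) (b+1)]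
    have := Nat.pow_right_injective (by norm_num : 2 ≤ 10) this
    omega
  case hf =>
    intro k
    refine ⟨⟨2*10^(k+1)+1, rfl⟩, ?_, ?_⟩
    · have e : (2*10^(k+1)+1)^2 = 1 + 4*10^(k+1) + 4*10^(2*k+2) := by ring
      rw [e, digits_family]
      intro d hd
      simp only [List.mem_append, List.mem_singleton, List.mem_replicate] at hd
      rcases hd with ((((h|h)|h)|h)|h) <;> first | simp [h] | simp [h.2]
    · rintro ⟨N, j, _, hj, hn⟩
      have h10 : (2*10^(k+1)+1)^2 % 10 = 1 := by
        have : (2*10^(k+1)+1)^2 = 1 + 10*(4*10^(2*k+1) + 4*10^k) := by ring_nf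
        omega
      have : N * 10^(2*j) % 10 = 0 := by
        have : 2*j = 2*j - 1 + 1 := by omega
        rw [this, pow_succ, ← mul_assoc]
        simp [Nat.mul_mod_left]
      omega
end

section
/- For every natural number k ≥ 0, (2 · 10^(k+1) + 1)^2 = (4 · 10^(k+1) + 4) · 10^(k+1) + 1, and every decimal digit of this number belongs to {0,1,4,9}. -/
theorem stmt_5 : ∀ k : ℕ,
    (2 * 10^(k+1) + 1)^2 = (4 * 10^(k+1) + 4) * 10^(k+1) + 1 ∧
    ∀ d ∈ Nat.digits 10 ((4 * 10^(k+1) + 4) * 10^(k+1) + 1),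
      d ∈ ({0, 1, 4, 9} : Set ℕ) := by
  intro k
  constructor
  · ring
  · have h4 : Nat.digits 10 (4 + 10 ^ (1 + k) * 4) =
        [4] ++ List.replicate k 0 ++ [4] := by
      have := Nat.digits_append_zeroes_append_digits (b := 10) (k := k) (m := 4) (n := 4)
        (by norm_num) (by norm_num)
      simpa using this.symm
    have h1 : Nat.digits 10 (1 + 10 ^ (1 + k) * (4 + 10 ^ (1 + k) * 4)) =
        [1] ++ List.replicate k 0 ++ ([4] ++ List.replicate k 0 ++ [4]) := by
      have := Nat.digits_append_zeroes_append_digits (b := 10) (k := k)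
        (m := 4 + 10 ^ (1 + k) * 4) (n := 1) (by norm_num) (by positivity)
      rw [h4] at this
      simpa using this.symm
    have he : (4 * 10^(k+1) + 4) * 10^(k+1) + 1 =
        1 + 10 ^ (1 + k) * (4 + 10 ^ (1 + k) * 4) := by ring
    rw [he, h1]
    intro d hd
    simp only [List.mem_append, List.mem_replicate, List.mem_singleton] at hd
    rcases hd with ((h|⟨-,h⟩)|((h|⟨-,h⟩)|h)) <;> simp [h]
end

section
/- Let a(1) = a(2) = 1, a(2p+1) = a(p+1) − 1, and a(2p+2) = a(p+1) + 1 for p ≥ 1 (values in the integers). Then for every p with 1 ≤ p ≤ 5000, a(1) + a(2) + ... + a(p) = a(p+1) + a(p+2) + ... + a(2p). -/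
theorem stmt_16 (a : ℕ → ℤ) (h1 : a 1 = 1) (h2 : a 2 = 1)
    (hodd : ∀ p : ℕ, 1 ≤ p → a (2*p+1) = a (p+1) - 1)
    (heven : ∀ p : ℕ, 1 ≤ p → a (2*p+2) = a (p+1) + 1) :
    ∀ p : ℕ, 1 ≤ p → p ≤ 5000 →
      ∑ i ∈ Finset.Icc 1 p, a i = ∑ i ∈ Finset.Icc (p+1) (2*p), a i := by
  have key : ∀ p : ℕ, 1 ≤ p →
      ∑ i ∈ Finset.Icc 1 p, a i = ∑ i ∈ Finset.Icc (p+1) (2*p), a i := by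
    intro p hp
    induction p, hp using Nat.le_induction with
    | base => simp [h1, h2]
    | succ p hp ih =>
      have hL : ∑ i ∈ Finset.Icc 1 (p+1), a i = (∑ i ∈ Finset.Icc 1 p, a i) + a (p+1) := by
      
        rw [Finset.sum_Icc_succ_top (by omega)]
      have h2p : 2 * (p+1) = (2*p+1)+1 := by ring
      have hR1 : ∑ i ∈ Finset.Icc (p+1+1) (2*(p+1)), a i
          = (∑ i ∈ Finset.Icc (p+2) (2*p+1), a i) + a (2*p+2) := by
        rw [h2p, Finset.sum_Icc_succ_top (by omega)]

      have hR2 : ∑ i ∈ Finset.Icc (p+2) (2*p+1), a i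
          = (∑ i ∈ Finset.Icc (p+2) (2*p), a i) + a (2*p+1) := by
        rw [Finset.sum_Icc_succ_top (by omega)]
      have hR3 : ∑ i ∈ Finset.Icc (p+1) (2*p), a i
          = a (p+1) + ∑ i ∈ Finset.Icc (p+2) (2*p), a i := by
        rw [Finset.Icc_eq_cons_Ioc (by omega : p+1 ≤ 2*p), Finset.sum_cons,
          ← Finset.Icc_add_one_left_eq_Ioc]
        rfl
      rw [hL, hR1, hR2, hodd p hp, heven p hp, ih]
      rw [hR3]
      ring
  intro p hp _
  exact key p hp
end

section
/- Let a(1) = a(2) = 1, a(2p+1) = a(p+1) − 1, a(2p+2) = a(p+1) + 1. Then for all p ≥ 1, the sum of the first p terms equals the sum of terms from p+1 to 2p. -/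
theorem stmt_17 (a : ℕ → ℤ) (h1 : a 1 = 1) (h2 : a 2 = 1)
    (hodd : ∀ p : ℕ, 1 ≤ p → a (2*p+1) = a (p+1) - 1)
    (heven : ∀ p : ℕ, 1 ≤ p → a (2*p+2) = a (p+1) + 1) :
    ∀ p : ℕ, 1 ≤ p →
      ∑ i ∈ Finset.Icc 1 p, a i = ∑ i ∈ Finset.Icc (p+1) (2*p), a i := by
  have key : ∀ p : ℕ, 1 ≤ p →
      ∑ i ∈ Finset.Ioc 0 (2*p), a i = 2 * ∑ i ∈ Finset.Ioc 0 p, a i := by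
    intro p hp
    induction p, hp using Nat.le_induction with
    | base =>
      have : Finset.Ioc 0 2 = {1, 2} := by decide
      rw [this]
      simp [h1, h2]
    | succ n hn ih =>
      have e1 : 2 * (n + 1) = (2 * n + 1) + 1 := by ring
      rw [e1, Finset.sum_Ioc_succ_top (by omega), Finset.sum_Ioc_succ_top (by omega),
        Finset.sum_Ioc_succ_top (by omega), ih]
      have ho := hodd n hn
      have he := heven n hn
      have : 2 * n + 1 + 1 = 2 * n + 2 := by ring
      rw [this, ho, he]
      ring
  intro p hp
  have split : ∑ i ∈ Finset.Ioc 0 p, a i + ∑ i ∈ Finset.Ioc p (2*p), a i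
      = ∑ i ∈ Finset.Ioc 0 (2*p), a i :=
    Finset.sum_Ioc_consecutive _ (by omega) (by omega)
  have hk := key p hp
  have h1' : Finset.Icc 1 p = Finset.Ioc 0 p := by
    ext x; simp [Finset.mem_Icc, Finset.mem_Ioc]; omega
  have h2' : Finset.Icc (p+1) (2*p) = Finset.Ioc p (2*p) := by
    ext x; simp [Finset.mem_Icc, Finset.mem_Ioc]
  rw [h1', h2']
  omega
end
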